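/- For the Lag system R_t (which extends R_p with rules blank·t → p, blank·w → blank, t·blank → w, w·blank → w, w·p → t, p·w → blank), starting from the string (s₁,blank)...(s_{n-2},blank)(s_{n-1},t)(sₙ,blank) with n ≥ 3: after (n−1)² iterations the memory string is (s₂,blank)...(s_{n-1},w)(sₙ,p)(s₁,blank), and after n(n−1) iterations the memory string equals the initial string. -/

import Mathlib

namespace Stmt5

/-- Control symbols: blank, pulse `p`, and the stationary tokens `t`, `w`. -/
inductive Ctl | blank | p | t | w
deriving DecidableEq

/-- The rule set `R_t` on control coordinates: `R_p` extended with
`blank·t → p`, `blank·w → blank`, `t·blank → w`, `w·blank → w`,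
`w·p → t`, `p·w → blank`. -/
def rc : Ctl → Ctl → Option Ctl
  | .blank, .blank => some .blank
  | .blank, .p => some .p
  | .p, .blank => some .blank
  | .blank, .t => some .p
  | .blank, .w => some .blank
  | .t, .blank => some .w
  | .w, .blank => some .w
  | .w, .p => some .t
  | .p, .w => some .blank
  | _, _ => none

/-- One Lag iteration with context length 2. -/
def step {α : Type*} (r : Ctl → Ctl → Option Ctl) :
    List (α × Ctl) → Option (List (α × Ctl))
  | (x, a) :: (y, b) :: rest => (r a b).map fun c => (y, b) :: rest ++ [(x, c)]
  | _ => none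

/-- `k` iterations of the Lag system. -/
def iterL {α : Type*} (r : Ctl → Ctl → Option Ctl) :
    ℕ → List (α × Ctl) → Option (List (α × Ctl))
  | 0, s => some s
  | k + 1, s => (step r s).bind (iterL r k)

end Stmt5

/-!
Write the initial string as `B d t v` with `B` a run of `n - 3` blanks. After `n - 1` steps the
token `t` has sent a pulse to its left neighbour `d` and has become the waiting token `w`. From
then on a full revolution of `n` steps moves the pulse one cell to the left, since blanks pass
both the pulse and `w` unchanged; after `n - 3` revolutions the pulse sits on the first cell and
two more steps hand it to the last one: this is the string after
`(n - 1) + n (n - 3) + 2 = (n - 1)²` steps. Within the next `n - 1` steps `w·p → t` restores the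
token and the initial string is back.
-/

namespace Stmt5

variable {α : Type*}

def blanks (xs : List α) : List (α × Ctl) := xs.map (·, .blank)

@[simp] theorem blanks_nil : blanks ([] : List α) = [] := rfl

@[simp] theorem blanks_cons (x : α) (xs : List α) :
    blanks (x :: xs) = (x, .blank) :: blanks xs := rfl

@[simp] theorem blanks_append (xs ys : List α) : blanks (xs ++ ys) = blanks xs ++ blanks ys :=
  List.map_append

section
variable {r : Ctl → Ctl → Option Ctl}

theorem iterL_add (a b : ℕ) (s : List (α × Ctl)) :
    iterL r (a + b) s = (iterL r a s).bind (iterL r b) := by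
  induction a generalizing s with
  | zero => simp [iterL]
  | succ a ih =>
    rw [Nat.succ_add]
    simp only [iterL, Option.bind_assoc]
    cases step r s <;> simp [ih]

theorem iterL_add_of_eq {a b : ℕ} {s s' : List (α × Ctl)} (h : iterL r a s = some s') :
    iterL r (a + b) s = iterL r b s' := by
  rw [iterL_add, h, Option.bind_some]

theorem iterL_succ_cons_cons {a b c : Ctl} (h : r a b = some c) (k : ℕ) (x y : α)
    (l : List (α × Ctl)) :
    iterL r (k + 1) ((x, a) :: (y, b) :: l) = iterL r k ((y, b) :: (l ++ [(x, c)])) := by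
  simp [iterL, step, h]

theorem iterL_blanks_append (hbb : r .blank .blank = some .blank) {c : Ctl}
    (hc : r .blank c = some .blank) (xs : List α) (y : α) (l : List (α × Ctl)) :
    iterL r xs.length (blanks xs ++ (y, c) :: l) = some ((y, c) :: (l ++ blanks xs)) := by
  induction xs generalizing l with
  | nil => simp [iterL]
  | cons x xs ih =>
    cases xs with
    | nil => simpa [iterL] using iterL_succ_cons_cons hc 0 x y l
    | cons x' xs => simpa [iterL_succ_cons_cons hbb] using ih (l ++ [(x, Ctl.blank)])

end

theorem iterL_rc_emit_pulse (xs : List α) (x y z : α) :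
    iterL rc (xs.length + 2) (blanks xs ++ [(x, .blank), (y, .t), (z, .blank)]) =
      some ((z, .blank) :: (blanks xs ++ [(x, .p), (y, .w)])) := by
  rw [iterL_add_of_eq (iterL_blanks_append (c := .blank) rfl rfl xs x _)]
  simp [iterL, step, rc]

theorem iterL_rc_shift_pulse (x u : α) (ys : List α) (v : α) (l : List (α × Ctl)) :
    iterL rc 2 ((x, .blank) :: (u, .p) :: (blanks ys ++ (v, .w) :: l)) =
      some (blanks ys ++ (v, .w) :: (l ++ [(x, .p), (u, .blank)])) := by
  cases ys <;> simp [iterL, step, rc]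

theorem iterL_rc_pulse_round (z : α) (xs : List α) (x u : α) (ys : List α) (v : α) :
    iterL rc (xs.length + ys.length + 4)
      ((z, .blank) :: (blanks xs ++ (x, .blank) :: (u, .p) :: (blanks ys ++ [(v, .w)]))) =
      some ((z, .blank) :: (blanks xs ++ (x, .p) :: (u, .blank) :: (blanks ys ++ [(v, .w)]))) := by
  have h₁ := iterL_blanks_append (r := rc) (c := .blank) rfl rfl (z :: xs) x
    ((u, .p) :: (blanks ys ++ [(v, .w)]))
  have h₂ := iterL_rc_shift_pulse x u ys v (blanks (z :: xs))
  have h₃ := iterL_blanks_append (r := rc) (c := .w) rfl rfl ys v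
    (blanks (z :: xs) ++ [(x, .p), (u, .blank)])
  simp only [blanks_cons, List.cons_append, List.nil_append, List.append_assoc,
    List.length_cons] at h₁ h₂ h₃
  rw [show xs.length + ys.length + 4 = xs.length + 1 + (2 + (ys.length + 1)) by omega,
    iterL_add_of_eq h₁, iterL_add_of_eq h₂, iterL_add_of_eq h₃]
  simp [iterL, step, rc]

theorem iterL_rc_pulse_rounds (z : α) (xs ys : List α) (y : α) (zs : List α) (v : α) {e : α}
    {es : List α} (h : ys ++ y :: zs = e :: es) :
    iterL rc (ys.length * (xs.length + ys.length + zs.length + 3))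
      ((z, .blank) :: (blanks xs ++ (blanks ys ++ (y, .p) :: (blanks zs ++ [(v, .w)])))) =
      some ((z, .blank) :: (blanks xs ++ (e, .p) :: (blanks es ++ [(v, .w)]))) := by
  induction ys using List.reverseRecOn generalizing y zs with
  | nil =>
    obtain ⟨rfl, rfl⟩ := List.cons_eq_cons.mp h
    simp [iterL]
  | append_singleton ys x ih =>
    have hround := iterL_rc_pulse_round z (xs ++ ys) x y zs v
    simp only [blanks_append, List.append_assoc, List.length_append] at hround
    rw [show (ys ++ [x]).length * (xs.length + (ys ++ [x]).length + zs.length + 3) =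
        xs.length + ys.length + zs.length + 4 +
          ys.length * (xs.length + ys.length + (y :: zs).length + 3) by
        simp only [List.length_append, List.length_cons, List.length_nil]; ring]
    simp only [blanks_append, blanks_cons, blanks_nil, List.append_assoc, List.cons_append,
      List.nil_append]
    rw [iterL_add_of_eq hround]
    simpa using ih x (y :: zs) (by simpa using h)

theorem iterL_rc_absorb_pulse (es : List α) (y v e : α) :
    iterL rc (es.length + 2) (blanks es ++ [(y, .w), (v, .p), (e, .blank)]) =
      some ((e, .blank) :: (blanks es ++ [(y, .t), (v, .blank)])) := by
  rw [iterL_add_of_eq (iterL_blanks_append (c := .w) rfl rfl es y _)]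
  simp [iterL, step, rc]

section
variable {ds es : List α} {d e : α}

theorem iterL_rc_start_to_rotated (h : ds ++ [d] = e :: es) (y v : α) :
    iterL rc ((ds.length + 2) ^ 2) (blanks ds ++ [(d, .blank), (y, .t), (v, .blank)]) =
      some (blanks es ++ [(y, .w), (v, .p), (e, .blank)]) := by
  have h₁ := iterL_rc_emit_pulse ds d y v
  have h₂ := iterL_rc_pulse_rounds v [] ds d [] y h
  have h₃ := iterL_rc_shift_pulse v e es y []
  simp only [blanks_nil, List.nil_append, List.length_nil, zero_add, add_zero] at h₂ h₃
  rw [show (ds.length + 2) ^ 2 = ds.length + 2 + (ds.length * (ds.length + 3) + 2) by ring,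
    iterL_add_of_eq h₁, iterL_add_of_eq h₂, h₃]

theorem iterL_rc_rotated_to_start (h : ds ++ [d] = e :: es) (y v : α) :
    iterL rc (es.length + 2) (blanks es ++ [(y, .w), (v, .p), (e, .blank)]) =
      some (blanks ds ++ [(d, .blank), (y, .t), (v, .blank)]) := by
  rw [iterL_rc_absorb_pulse, ← List.cons_append, ← blanks_cons, ← h]
  simp

end

section
variable {m : ℕ} (s : Fin (m + 3) → α)

theorem ofFn_start_eq :
    (List.ofFn fun i : Fin (m + 3) => (s i, if i.val = m + 3 - 2 then Ctl.t else Ctl.blank)) =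
      blanks (List.ofFn fun i : Fin m => s (Fin.castAdd 3 i)) ++
        [(s ⟨m, by omega⟩, .blank), (s ⟨m + 1, by omega⟩, .t),
          (s ⟨m + 2, by omega⟩, .blank)] := by
  rw [List.ofFn_add]
  simp only [blanks, List.map_ofFn]
  congr 1
  · congr 1
    funext i
    rw [if_neg (by simp only [Fin.val_castLE]; omega)]
    rfl
  · simp [Fin.natAdd]

theorem ofFn_rotated_eq :
    (List.ofFn fun i : Fin (m + 3) =>
      (s ⟨(i.val + 1) % (m + 3), Nat.mod_lt _ (by omega)⟩,
        if i.val = m + 3 - 3 then Ctl.w else if i.val = m + 3 - 2 then Ctl.p else Ctl.blank)) =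
      blanks (List.ofFn fun i : Fin m => s ⟨i + 1, by omega⟩) ++
        [(s ⟨m + 1, by omega⟩, .w), (s ⟨m + 2, by omega⟩, .p), (s 0, .blank)] := by
  rw [List.ofFn_add]
  simp only [blanks, List.map_ofFn]
  congr 1
  · congr 1
    funext i
    simp [Nat.mod_eq_of_lt (show i.val + 1 < m + 3 by omega), i.isLt.ne,
      show i.val ≠ m + 1 by omega]
  · simp [Nat.mod_eq_of_lt (show m + 1 < m + 3 by omega)]

theorem ofFn_castAdd_append_eq_cons :
    (List.ofFn fun i : Fin m => s (Fin.castAdd 3 i)) ++ [s ⟨m, by omega⟩] =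
      s 0 :: List.ofFn fun i : Fin m => s ⟨i + 1, by omega⟩ := by
  trans List.ofFn fun i : Fin (m + 1) => s (Fin.castAdd 2 i)
  · rw [List.ofFn_succ_last]
    rfl
  · rw [List.ofFn_succ]
    rfl

end

end Stmt5

open Stmt5 in
/-- Starting from `(s₁,blank)...(s_{n-2},blank)(s_{n-1},t)(sₙ,blank)` with `n ≥ 3`:
after `(n−1)²` iterations the string is `(s₂,blank)...(s_{n-1},w)(sₙ,p)(s₁,blank)`,
and after `n(n−1)` iterations the string equals the initial string. -/
theorem stmt5 {α : Type*} (n : ℕ) (hn : 3 ≤ n) (s : Fin n → α) :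
    iterL rc ((n - 1) ^ 2)
      (List.ofFn fun i : Fin n => (s i, if i.val = n - 2 then Ctl.t else Ctl.blank)) =
      some (List.ofFn fun i : Fin n =>
        (s ⟨(i.val + 1) % n, Nat.mod_lt _ (by omega)⟩,
          if i.val = n - 3 then Ctl.w else if i.val = n - 2 then Ctl.p else Ctl.blank)) ∧
    iterL rc (n * (n - 1))
      (List.ofFn fun i : Fin n => (s i, if i.val = n - 2 then Ctl.t else Ctl.blank)) =
      some (List.ofFn fun i : Fin n =>
        (s i, if i.val = n - 2 then Ctl.t else Ctl.blank)) := by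
  obtain ⟨m, rfl⟩ : ∃ m, n = m + 3 := ⟨n - 3, by omega⟩
  have hforward := iterL_rc_start_to_rotated (ofFn_castAdd_append_eq_cons s)
    (s ⟨m + 1, by omega⟩) (s ⟨m + 2, by omega⟩)
  have hback := iterL_rc_rotated_to_start (ofFn_castAdd_append_eq_cons s)
    (s ⟨m + 1, by omega⟩) (s ⟨m + 2, by omega⟩)
  simp only [List.length_ofFn] at hforward hback
  rw [show m + 3 - 1 = m + 2 from rfl, ofFn_start_eq, ofFn_rotated_eq]
  refine ⟨hforward, ?_⟩
  rw [show (m + 3) * (m + 2) = (m + 2) ^ 2 + (m + 2) by ring, iterL_add_of_eq hforward, hback]
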